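/- arXiv:2510.02230 — 2 statements merged into one kernel-verified Lean document; each statement's English description precedes it below -/
import Mathlib

section
/- Let V ≥ 3, z : Fin V → ℝ, y₁ ≠ y₂ in Fin V, η' > 0, π = σ(z), Δπ = π_{y₁} + π_{y₂}, and suppose π_{y₁} > π_{y₂}. Define the REINFORCE-updated logits z'_j = z_j − η'·Δπ·π_j for j ∉ {y₁, y₂} and z'_j = z_j − η'·(Δπ − 1)·π_j for j ∈ {y₁, y₂}, and let π' = σ(z'). Then π'_{y₁} > π_{y₁}: the probability of the higher-likelihood rewarded action strictly increases after one REINFORCE step. -/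
/-!
Softmax is invariant under shifting all logits, so `σ(z)_y = (∑ⱼ exp (z_j - z_y))⁻¹` increases
as soon as the logit `z_y` gains at least as much as every other logit, and strictly more than one.
The REINFORCE step moves logit `j` by `η'(1 - Δπ)π_j` for the rewarded actions and by `-η'Δπ π_j`
otherwise. Since a third action carries positive mass, `Δπ < 1`, so `y₁` gains the most, strictly
more than `y₂` because `π_{y₂} < π_{y₁}`.
-/

noncomputable def softmax {V : ℕ} (z : Fin V → ℝ) (i : Fin V) : ℝ :=
  Real.exp (z i) / ∑ j, Real.exp (z j)

section

variable {V : ℕ}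

lemma sum_exp_pos (z : Fin V → ℝ) (i : Fin V) : 0 < ∑ j, Real.exp (z j) :=
  Finset.sum_pos (fun j _ => Real.exp_pos (z j)) ⟨i, Finset.mem_univ i⟩

lemma softmax_pos (z : Fin V → ℝ) (i : Fin V) : 0 < softmax z i :=
  div_pos (Real.exp_pos _) (sum_exp_pos z i)

lemma sum_softmax_lt_one (z : Fin V → ℝ) {s : Finset (Fin V)} {i : Fin V} (hi : i ∉ s) :
    ∑ j ∈ s, softmax z j < 1 := by
  simp only [softmax, ← Finset.sum_div]
  rw [div_lt_one (sum_exp_pos z i)]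
  exact Finset.sum_lt_sum_of_subset (Finset.subset_univ s) (Finset.mem_univ i) hi
    (Real.exp_pos _) (fun j _ _ => (Real.exp_pos _).le)

lemma softmax_eq_inv_sum_exp_sub (z : Fin V → ℝ) (i : Fin V) :
    softmax z i = (∑ j, Real.exp (z j - z i))⁻¹ := by
  simp only [softmax, Real.exp_sub, ← Finset.sum_div, inv_div]

lemma softmax_lt_softmax_of_sub_le {z z' : Fin V → ℝ} {y k : Fin V}
    (hle : ∀ j, z' j - z j ≤ z' y - z y) (hlt : z' k - z k < z' y - z y) :
    softmax z y < softmax z' y := by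
  have hpos : ∀ w : Fin V → ℝ, 0 < ∑ j, Real.exp (w j - w y) := fun w => sum_exp_pos _ y
  rw [softmax_eq_inv_sum_exp_sub, softmax_eq_inv_sum_exp_sub, inv_lt_inv₀ (hpos z) (hpos z')]
  refine Finset.sum_lt_sum (fun j _ => ?_) ⟨k, Finset.mem_univ k, ?_⟩
  · exact Real.exp_le_exp.mpr (by linarith [hle j])
  · exact Real.exp_lt_exp.mpr (by linarith)

end

/-- Winner-take-all: if `π_{y₁} > π_{y₂}` are the two rewarded actions, then after one
REINFORCE step the probability of the higher-likelihood rewarded action strictly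
increases: `π'_{y₁} > π_{y₁}`. -/
theorem reinforce_winner_increases {V : ℕ} (hV : 3 ≤ V) (z : Fin V → ℝ)
    (y₁ y₂ : Fin V) (hy : y₁ ≠ y₂) (η' : ℝ) (hη : 0 < η')
    (hπ : softmax z y₂ < softmax z y₁) :
    let π := softmax z
    let Δπ := π y₁ + π y₂
    let z' : Fin V → ℝ := fun j =>
      if j = y₁ ∨ j = y₂ then z j - η' * ((Δπ - 1) * π j) else z j - η' * (Δπ * π j)
    softmax z y₁ < softmax z' y₁ := by
  intro π Δπ z'
  have hΔ_pos : 0 < Δπ := add_pos (softmax_pos z y₁) (softmax_pos z y₂)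
  have hΔ_lt_one : Δπ < 1 := by
    obtain ⟨k, -, hk⟩ := Finset.exists_mem_notMem_of_card_lt_card (s := {y₁, y₂})
      (t := Finset.univ) (by rw [Finset.card_pair hy, Finset.card_univ, Fintype.card_fin]; omega)
    simpa only [Finset.sum_pair hy] using sum_softmax_lt_one z hk
  have hgain : ∀ j, z' j - z j =
      if j = y₁ ∨ j = y₂ then η' * (1 - Δπ) * π j else -(η' * Δπ * π j) := by
    intro j
    simp only [z']
    split_ifs <;> ring
  have hgain₁ : z' y₁ - z y₁ = η' * (1 - Δπ) * π y₁ := by simp [hgain]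
  have hrate : 0 < η' * (1 - Δπ) := mul_pos hη (sub_pos.mpr hΔ_lt_one)
  refine softmax_lt_softmax_of_sub_le (k := y₂) (fun j => ?_) ?_
  · rw [hgain j, hgain₁]
    split_ifs with hj
    · have hπj : π j ≤ π y₁ := by
        rcases hj with rfl | rfl
        exacts [le_rfl, hπ.le]
      exact mul_le_mul_of_nonneg_left hπj hrate.le
    · have hloss : 0 < η' * Δπ * π j := mul_pos (mul_pos hη hΔ_pos) (softmax_pos z j)
      have hwin : 0 < η' * (1 - Δπ) * π y₁ := mul_pos hrate (softmax_pos z y₁)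
      linarith
  · rw [hgain₁, hgain y₂, if_pos (Or.inr rfl)]
    exact mul_lt_mul_of_pos_left hπ hrate
end

section
/- Let V ≥ 2, z : Fin V → ℝ, y₁ ≠ y₂ in Fin V, η' > 0, π = σ(z), and suppose π_{y₁} > π_{y₂}. Define the MLE-updated logits z'_j = z_j − 2η'π_j + η'·𝟙[j ∈ {y₁, y₂}], and let π' = σ(z'). Then π'_{y₁} / π'_{y₂} < π_{y₁} / π_{y₂}: one MLE (off-policy maximum-likelihood) step strictly shrinks the probability ratio between the two rewarded actions, pushing mass toward the lower-likelihood one. -/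
lemma softmax_ratio {V : ℕ} [NeZero V] (z : Fin V → ℝ) (i j : Fin V) :
    softmax z i / softmax z j = Real.exp (z i - z j) := by
  have hS : (0:ℝ) < ∑ k, Real.exp (z k) :=
    Finset.sum_pos (fun k _ => Real.exp_pos _) ⟨⟨0, Nat.pos_of_ne_zero (NeZero.ne V)⟩,
      Finset.mem_univ _⟩
  rw [softmax, softmax, Real.exp_sub]
  rw [div_div_div_eq]
  rw [mul_comm (Real.exp (z i)) _, mul_div_mul_left _ _ hS.ne']

/-- MLE avoids collapse: if `π_{y₁} > π_{y₂}` are the two rewarded actions, then one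
off-policy maximum-likelihood step strictly shrinks the probability ratio:
`π'_{y₁} / π'_{y₂} < π_{y₁} / π_{y₂}`. -/
theorem mle_ratio_shrinks {V : ℕ} (hV : 2 ≤ V) (z : Fin V → ℝ)
    (y₁ y₂ : Fin V) (hy : y₁ ≠ y₂) (η' : ℝ) (hη : 0 < η')
    (hπ : softmax z y₂ < softmax z y₁) :
    let π := softmax z
    let z' : Fin V → ℝ := fun j =>
      z j - 2 * η' * π j + η' * (if j = y₁ ∨ j = y₂ then 1 else 0)
    softmax z' y₁ / softmax z' y₂ < softmax z y₁ / softmax z y₂ := by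
  intro π z'
  have : NeZero V := ⟨by omega⟩
  rw [softmax_ratio, softmax_ratio]
  apply Real.exp_lt_exp.mpr
  simp only [z', eq_self_iff_true, true_or, or_true, if_true]
  nlinarith [hπ, hη]
end
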